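/- arXiv:2012.06636 — 2 statements merged into one kernel-verified Lean document; each statement's English description precedes it below -/
import Mathlib

section
/- Let G be a fan quasigroup with neutral element e and maps t, p. Then for all a, a₁, a₂, a₃ ∈ G and all z₁, z₂, z₃ in the center C(G): (i) t(z₁a₁, z₂a₂, z₃a₃) = t(a₁, a₂, a₃); (ii) p(z₁a₁, z₂a₂, z₃a₃) = p(a₁, a₂, a₃); (iii) t(a, a\e, a)·a = a·p(a, a\e, a); (iv) t(a, e/a, a)·a = a·p(a, e/a, a); (v) p(a, a\e, a)·t(e/a, a, a\e) = e. -/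
/-- The left nucleus of a binary operation. -/
def leftNucleus {G : Type*} (mul : G → G → G) : Set G :=
  {a | ∀ b c, mul (mul a b) c = mul a (mul b c)}

/-- The middle nucleus of a binary operation. -/
def midNucleus {G : Type*} (mul : G → G → G) : Set G :=
  {a | ∀ b c, mul (mul b a) c = mul b (mul a c)}

/-- The right nucleus of a binary operation. -/
def rightNucleus {G : Type*} (mul : G → G → G) : Set G :=
  {a | ∀ b c, mul (mul b c) a = mul b (mul c a)}

/-- The nucleus `N(G)` of a binary operation. -/
def nucleusSet {G : Type*} (mul : G → G → G) : Set G :=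
  leftNucleus mul ∩ midNucleus mul ∩ rightNucleus mul

/-- The commutant `Com(G)` of a binary operation. -/
def comSet {G : Type*} (mul : G → G → G) : Set G :=
  {a | ∀ b, mul a b = mul b a}

/-- The center `C(G) = Com(G) ∩ N(G)` of a binary operation. -/
def centerSet {G : Type*} (mul : G → G → G) : Set G :=
  comSet mul ∩ nucleusSet mul

/-- A fan quasigroup: a unital quasigroup `G` (with left division `ldiv` and right
division `rdiv`, so `a\b = ldiv a b` and `a/b = rdiv a b`) together with maps
`t, p : G×G×G → N(G)` such that `(ab)c = t(a,b,c)·(a(bc))` and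
`(ab)c = (a(bc))·p(a,b,c)`. -/
structure FanQuasigroup (G : Type*) where
  mul : G → G → G
  ldiv : G → G → G
  rdiv : G → G → G
  e : G
  mul_ldiv : ∀ a b, mul a (ldiv a b) = b
  ldiv_mul : ∀ a b, ldiv a (mul a b) = b
  rdiv_mul : ∀ a b, mul (rdiv a b) b = a
  mul_rdiv : ∀ a b, rdiv (mul a b) b = a
  one_mul : ∀ a, mul e a = a
  mul_one : ∀ a, mul a e = a
  t : G → G → G → G
  p : G → G → G → G
  t_mem : ∀ a b c, t a b c ∈ nucleusSet mul
  p_mem : ∀ a b c, p a b c ∈ nucleusSet mul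
  t_spec : ∀ a b c, mul (mul a b) c = mul (t a b c) (mul a (mul b c))
  p_spec : ∀ a b c, mul (mul a b) c = mul (mul a (mul b c)) (p a b c)

/-- The inverse of an element in the group `N(G)`, computed as `x\e`. -/
def FanQuasigroup.inv {G : Type*} (Q : FanQuasigroup G) (x : G) : G := Q.ldiv x Q.e

/-- A subset `S` of a fan quasigroup is a subgroup if it contains the neutral
element, is closed under multiplication and inversion, and multiplication
restricted to it is associative (so that it is a group). -/
def FanQuasigroup.IsSubgrp {G : Type*} (Q : FanQuasigroup G) (S : Set G) : Prop :=
  Q.e ∈ S ∧ (∀ x ∈ S, ∀ y ∈ S, Q.mul x y ∈ S) ∧ (∀ x ∈ S, Q.ldiv x Q.e ∈ S) ∧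
    (∀ x ∈ S, ∀ y ∈ S, ∀ z ∈ S, Q.mul (Q.mul x y) z = Q.mul x (Q.mul y z))

/-- The fan `N₀(G)` of a topological fan quasigroup: the minimal closed subgroup
containing all the values `t(a,b,c)` and `p(a,b,c)`. -/
def FanQuasigroup.fan {G : Type*} [TopologicalSpace G] (Q : FanQuasigroup G) : Set G :=
  ⋂₀ {S : Set G | IsClosed S ∧ Q.IsSubgrp S ∧ ∀ a b c : G, Q.t a b c ∈ S ∧ Q.p a b c ∈ S}

/-- A subset `H` of a fan quasigroup is normal if `xH = Hx`, `(xy)H = x(yH)`,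
`(xH)y = x(Hy)` and `H(xy) = (Hx)y` for all `x, y`. -/
def FanQuasigroup.IsNormalSub {G : Type*} (Q : FanQuasigroup G) (H : Set G) : Prop :=
  ∀ x y : G,
    (fun h => Q.mul x h) '' H = (fun h => Q.mul h x) '' H ∧
    (fun h => Q.mul (Q.mul x y) h) '' H = (fun h => Q.mul x (Q.mul y h)) '' H ∧
    (fun h => Q.mul (Q.mul x h) y) '' H = (fun h => Q.mul x (Q.mul h y)) '' H ∧
    (fun h => Q.mul h (Q.mul x y)) '' H = (fun h => Q.mul (Q.mul h x) y) '' H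


namespace FanQuasigroup
variable {G : Type*} (Q : FanQuasigroup G)

theorem lcancel {a x y : G} (h : Q.mul a x = Q.mul a y) : x = y := by
  have h2 := congrArg (Q.ldiv a) h
  rwa [Q.ldiv_mul, Q.ldiv_mul] at h2

theorem rcancel {a x y : G} (h : Q.mul x a = Q.mul y a) : x = y := by
  have h2 := congrArg (fun w => Q.rdiv w a) h
  simpa only [Q.mul_rdiv] using h2

/-- For a central element `z`, `x(zy) = z(xy)`. -/
theorem zmid {z : G} (hz : z ∈ centerSet Q.mul) (x y : G) :
    Q.mul x (Q.mul z y) = Q.mul z (Q.mul x y) := by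
  obtain ⟨hc, ⟨hl, hm⟩, -⟩ := hz
  calc Q.mul x (Q.mul z y) = Q.mul (Q.mul x z) y := (hm x y).symm
    _ = Q.mul (Q.mul z x) y := by rw [hc x]
    _ = Q.mul z (Q.mul x y) := hl x y

/-- For a central element `z`, `z(xy) = (zx)y`. -/
theorem zleft {z : G} (hz : z ∈ centerSet Q.mul) (x y : G) :
    Q.mul z (Q.mul x y) = Q.mul (Q.mul z x) y := (hz.2.1.1 x y).symm

end FanQuasigroup

/-- in a fan quasigroup, for all `a, a₁, a₂, a₃` and all
`z₁, z₂, z₃` in the center `C(G)`: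
(i) `t(z₁a₁, z₂a₂, z₃a₃) = t(a₁, a₂, a₃)`;
(ii) `p(z₁a₁, z₂a₂, z₃a₃) = p(a₁, a₂, a₃)`;
(iii) `t(a, a\e, a)·a = a·p(a, a\e, a)`;
(iv) `t(a, e/a, a)·a = a·p(a, e/a, a)`;
(v) `p(a, a\e, a)·t(e/a, a, a\e) = e`. -/
theorem stmt_18 {G : Type*} (Q : FanQuasigroup G) (a a₁ a₂ a₃ : G)
    (z₁ z₂ z₃ : G) (hz₁ : z₁ ∈ centerSet Q.mul) (hz₂ : z₂ ∈ centerSet Q.mul)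
    (hz₃ : z₃ ∈ centerSet Q.mul) :
    Q.t (Q.mul z₁ a₁) (Q.mul z₂ a₂) (Q.mul z₃ a₃) = Q.t a₁ a₂ a₃ ∧
    Q.p (Q.mul z₁ a₁) (Q.mul z₂ a₂) (Q.mul z₃ a₃) = Q.p a₁ a₂ a₃ ∧
    Q.mul (Q.t a (Q.ldiv a Q.e) a) a = Q.mul a (Q.p a (Q.ldiv a Q.e) a) ∧
    Q.mul (Q.t a (Q.rdiv Q.e a) a) a = Q.mul a (Q.p a (Q.rdiv Q.e a) a) ∧
    Q.mul (Q.p a (Q.ldiv a Q.e) a) (Q.t (Q.rdiv Q.e a) a (Q.ldiv a Q.e)) = Q.e := by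
  have m := Q.mul
  -- abbreviations
  set e := Q.e with he
  have hab : Q.mul a (Q.ldiv a e) = e := Q.mul_ldiv a e
  have hca : Q.mul (Q.rdiv e a) a = e := Q.rdiv_mul e a
  set b := Q.ldiv a e with hbdef
  set c := Q.rdiv e a with hcdef
  -- part (i) and (ii): normalizing the two products
  have hL : Q.mul (Q.mul (Q.mul z₁ a₁) (Q.mul z₂ a₂)) (Q.mul z₃ a₃)
      = Q.mul z₁ (Q.mul z₂ (Q.mul z₃ (Q.mul (Q.mul a₁ a₂) a₃))) := by
    calc Q.mul (Q.mul (Q.mul z₁ a₁) (Q.mul z₂ a₂)) (Q.mul z₃ a₃)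
        = Q.mul (Q.mul z₁ (Q.mul a₁ (Q.mul z₂ a₂))) (Q.mul z₃ a₃) := by
          rw [hz₁.2.1.1 a₁ (Q.mul z₂ a₂)]
      _ = Q.mul (Q.mul z₁ (Q.mul z₂ (Q.mul a₁ a₂))) (Q.mul z₃ a₃) := by
          rw [Q.zmid hz₂ a₁ a₂]
      _ = Q.mul z₁ (Q.mul (Q.mul z₂ (Q.mul a₁ a₂)) (Q.mul z₃ a₃)) := by
          rw [hz₁.2.1.1]
      _ = Q.mul z₁ (Q.mul z₂ (Q.mul (Q.mul a₁ a₂) (Q.mul z₃ a₃))) := by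
          rw [hz₂.2.1.1]
      _ = Q.mul z₁ (Q.mul z₂ (Q.mul z₃ (Q.mul (Q.mul a₁ a₂) a₃))) := by
          rw [Q.zmid hz₃ (Q.mul a₁ a₂) a₃]
  have hR : Q.mul (Q.mul z₁ a₁) (Q.mul (Q.mul z₂ a₂) (Q.mul z₃ a₃))
      = Q.mul z₂ (Q.mul z₃ (Q.mul z₁ (Q.mul a₁ (Q.mul a₂ a₃)))) := by
    calc Q.mul (Q.mul z₁ a₁) (Q.mul (Q.mul z₂ a₂) (Q.mul z₃ a₃))
        = Q.mul (Q.mul z₁ a₁) (Q.mul z₂ (Q.mul a₂ (Q.mul z₃ a₃))) := by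
          rw [hz₂.2.1.1 a₂ (Q.mul z₃ a₃)]
      _ = Q.mul (Q.mul z₁ a₁) (Q.mul z₂ (Q.mul z₃ (Q.mul a₂ a₃))) := by
          rw [Q.zmid hz₃ a₂ a₃]
      _ = Q.mul z₂ (Q.mul (Q.mul z₁ a₁) (Q.mul z₃ (Q.mul a₂ a₃))) := by
          rw [Q.zmid hz₂]
      _ = Q.mul z₂ (Q.mul z₃ (Q.mul (Q.mul z₁ a₁) (Q.mul a₂ a₃))) := by
          rw [Q.zmid hz₃ (Q.mul z₁ a₁) (Q.mul a₂ a₃)]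
      _ = Q.mul z₂ (Q.mul z₃ (Q.mul z₁ (Q.mul a₁ (Q.mul a₂ a₃)))) := by
          rw [hz₁.2.1.1 a₁ (Q.mul a₂ a₃)]
  -- pulling the nucleus element t (resp. p) through central elements
  set W := Q.mul a₁ (Q.mul a₂ a₃) with hW
  set t0 := Q.t a₁ a₂ a₃ with ht0
  set p0 := Q.p a₁ a₂ a₃ with hp0
  have hreorder : Q.mul z₁ (Q.mul z₂ (Q.mul z₃ W)) = Q.mul z₂ (Q.mul z₃ (Q.mul z₁ W)) := by
    rw [Q.zmid hz₂ z₁ (Q.mul z₃ W), Q.zmid hz₃ z₁ W]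
  have hLt : Q.mul z₁ (Q.mul z₂ (Q.mul z₃ (Q.mul (Q.mul a₁ a₂) a₃)))
      = Q.mul t0 (Q.mul z₂ (Q.mul z₃ (Q.mul z₁ W))) := by
    rw [Q.t_spec a₁ a₂ a₃]
    rw [(Q.zmid hz₃ t0 W).symm, (Q.zmid hz₂ t0 (Q.mul z₃ W)).symm,
      (Q.zmid hz₁ t0 (Q.mul z₂ (Q.mul z₃ W))).symm, hreorder]
  have hLp : Q.mul z₁ (Q.mul z₂ (Q.mul z₃ (Q.mul (Q.mul a₁ a₂) a₃)))
      = Q.mul (Q.mul z₂ (Q.mul z₃ (Q.mul z₁ W))) p0 := by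
    rw [Q.p_spec a₁ a₂ a₃, ← hp0, ← hW]
    rw [Q.zleft hz₃ W p0, Q.zleft hz₂ (Q.mul z₃ W) p0,
      Q.zleft hz₁ (Q.mul z₂ (Q.mul z₃ W)) p0, hreorder]
  have part1 : Q.t (Q.mul z₁ a₁) (Q.mul z₂ a₂) (Q.mul z₃ a₃) = t0 := by
    have h := Q.t_spec (Q.mul z₁ a₁) (Q.mul z₂ a₂) (Q.mul z₃ a₃)
    rw [hL, hR] at h
    exact Q.rcancel (h.symm.trans hLt)
  have part2 : Q.p (Q.mul z₁ a₁) (Q.mul z₂ a₂) (Q.mul z₃ a₃) = p0 := by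
    have h := Q.p_spec (Q.mul z₁ a₁) (Q.mul z₂ a₂) (Q.mul z₃ a₃)
    rw [hL, hR] at h
    exact Q.lcancel (h.symm.trans hLp)
  -- part (iii)
  have ht3 : Q.mul (Q.t a b a) (Q.mul a (Q.mul b a)) = a := by
    rw [← Q.t_spec, hab, Q.one_mul]
  have hp3 : Q.mul (Q.mul a (Q.mul b a)) (Q.p a b a) = a := by
    rw [← Q.p_spec, hab, Q.one_mul]
  have part3 : Q.mul (Q.t a b a) a = Q.mul a (Q.p a b a) := by
    calc Q.mul (Q.t a b a) a
        = Q.mul (Q.t a b a) (Q.mul (Q.mul a (Q.mul b a)) (Q.p a b a)) := by rw [hp3]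
      _ = Q.mul (Q.mul (Q.t a b a) (Q.mul a (Q.mul b a))) (Q.p a b a) :=
          ((Q.t_mem a b a).1.1 _ _).symm
      _ = Q.mul a (Q.p a b a) := by rw [ht3]
  -- part (iv)
  have h41 : Q.mul (Q.mul a c) a = Q.mul (Q.t a c a) a := by
    rw [Q.t_spec, hca, Q.mul_one]
  have h42 : Q.mul (Q.mul a c) a = Q.mul a (Q.p a c a) := by
    rw [Q.p_spec, hca, Q.mul_one]
  have part4 : Q.mul (Q.t a c a) a = Q.mul a (Q.p a c a) := h41.symm.trans h42
  -- part (v)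
  set t' := Q.t c a b with ht'
  set p' := Q.p a b a with hp'
  have hb : b = Q.mul t' c := by
    have h := Q.t_spec c a b
    rwa [hca, hab, Q.one_mul, Q.mul_one, ← ht'] at h
  have hba : Q.mul b a = t' := by
    rw [hb, (Q.t_mem c a b).1.1 c a, hca, Q.mul_one]
  have ha : a = Q.mul a (Q.mul t' p') := by
    have h := Q.p_spec a b a
    rw [hab, Q.one_mul, hba, (Q.t_mem c a b).1.2 a p'] at h
    exact h
  have htp : Q.mul t' p' = e := by
    apply Q.lcancel (a := a)
    rw [← ha, Q.mul_one]
  have part5 : Q.mul p' t' = e := by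
    apply Q.lcancel (a := t')
    rw [← (Q.t_mem c a b).1.1 p' t', htp, Q.one_mul, Q.mul_one]
  exact ⟨part1, part2, part3, part4, part5⟩
end

section
/- Let G be a fan quasigroup with neutral element e and maps t, p. Then for all a₁, a₂, a₃ ∈ G and every b in the nucleus N(G): (i) t(a₁, a₂, a₃b) = t(a₁, a₂, a₃); (ii) p(ba₁, a₂, a₃) = p(a₁, a₂, a₃); (iii) t(ba₁, a₂, a₃) = b·t(a₁, a₂, a₃)·b⁻¹; (iv) p(a₁, a₂, a₃b) = b⁻¹·p(a₁, a₂, a₃)·b, where b⁻¹ is the inverse of b in the group N(G). -/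
namespace FanQuasigroup

variable {G : Type*} (Q : FanQuasigroup G)

/-- Uniqueness of `t`. -/
lemma t_eq_of {a b c x : G}
    (h : Q.mul (Q.mul a b) c = Q.mul x (Q.mul a (Q.mul b c))) : Q.t a b c = x := by
  have h1 : Q.mul (Q.t a b c) (Q.mul a (Q.mul b c))
      = Q.mul x (Q.mul a (Q.mul b c)) := by rw [← Q.t_spec, h]
  have h2 := congrArg (fun z => Q.rdiv z (Q.mul a (Q.mul b c))) h1
  simpa [Q.mul_rdiv] using h2

/-- Uniqueness of `p`. -/
lemma p_eq_of {a b c x : G}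
    (h : Q.mul (Q.mul a b) c = Q.mul (Q.mul a (Q.mul b c)) x) : Q.p a b c = x := by
  have h1 : Q.mul (Q.mul a (Q.mul b c)) (Q.p a b c)
      = Q.mul (Q.mul a (Q.mul b c)) x := by rw [← Q.p_spec, h]
  have h2 := congrArg (Q.ldiv (Q.mul a (Q.mul b c))) h1
  simpa [Q.ldiv_mul] using h2

lemma inv_mul_cancel' {b : G} (hb : b ∈ nucleusSet Q.mul) :
    Q.mul (Q.inv b) b = Q.e := by
  have hL : ∀ c d, Q.mul (Q.mul b c) d = Q.mul b (Q.mul c d) := hb.1.1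
  have h1 : Q.mul b (Q.mul (Q.inv b) b) = Q.mul b Q.e := by
    rw [Q.mul_one, ← hL, FanQuasigroup.inv, Q.mul_ldiv, Q.one_mul]
  have h2 := congrArg (Q.ldiv b) h1
  rwa [Q.ldiv_mul, Q.ldiv_mul] at h2

lemma inv_mem_nucleus {b : G} (hb : b ∈ nucleusSet Q.mul) :
    Q.inv b ∈ nucleusSet Q.mul := by
  have hL : ∀ c d, Q.mul (Q.mul b c) d = Q.mul b (Q.mul c d) := hb.1.1
  have hM : ∀ c d, Q.mul (Q.mul c b) d = Q.mul c (Q.mul b d) := hb.1.2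
  have hR : ∀ c d, Q.mul (Q.mul c d) b = Q.mul c (Q.mul d b) := hb.2
  set i := Q.inv b with hi
  have hbi : Q.mul b i = Q.e := Q.mul_ldiv b Q.e
  have hib : Q.mul i b = Q.e := Q.inv_mul_cancel' hb
  -- `mul c i = rdiv c b`
  have hri : ∀ c, Q.mul c i = Q.rdiv c b := by
    intro c
    have h1 : Q.mul (Q.mul c i) b = c := by rw [hR, hib, Q.mul_one]
    have h2 := congrArg (fun z => Q.rdiv z b) h1
    simpa [Q.mul_rdiv] using h2
  -- `mul i d = ldiv b d`
  have hli : ∀ d, Q.mul i d = Q.ldiv b d := by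
    intro d
    have h1 : Q.mul b (Q.mul i d) = d := by rw [← hL, hbi, Q.one_mul]
    have h2 := congrArg (Q.ldiv b) h1
    rwa [Q.ldiv_mul] at h2
  refine ⟨⟨fun c d => ?_, fun c d => ?_⟩, fun c d => ?_⟩
  · -- left nucleus
    have h1 : Q.mul b (Q.mul (Q.mul i c) d) = Q.mul c d := by
      rw [← hL, ← hL, hbi, Q.one_mul]
    have h2 : Q.mul b (Q.mul i (Q.mul c d)) = Q.mul c d := by
      rw [← hL, hbi, Q.one_mul]
    have h3 := congrArg (Q.ldiv b) (h1.trans h2.symm)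
    rwa [Q.ldiv_mul, Q.ldiv_mul] at h3
  · -- middle nucleus
    rw [hri c, hli d]
    have h1 : Q.mul (Q.mul (Q.rdiv c b) b) (Q.ldiv b d) = Q.mul (Q.rdiv c b) d := by
      rw [hM, Q.mul_ldiv]
    rw [Q.rdiv_mul] at h1
    rw [h1]
  · -- right nucleus
    rw [hri (Q.mul c d), hri d]
    have h1 : Q.mul (Q.mul c (Q.rdiv d b)) b = Q.mul c d := by
      rw [hR, Q.rdiv_mul]
    have h2 := congrArg (fun z => Q.rdiv z b) h1
    simpa [Q.mul_rdiv] using h2.symm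

end FanQuasigroup

/-- in a fan quasigroup, for all `a₁, a₂, a₃` and every `b` in the
nucleus `N(G)`:
(i) `t(a₁, a₂, a₃b) = t(a₁, a₂, a₃)`;
(ii) `p(ba₁, a₂, a₃) = p(a₁, a₂, a₃)`;
(iii) `t(ba₁, a₂, a₃) = b·t(a₁, a₂, a₃)·b⁻¹`;
(iv) `p(a₁, a₂, a₃b) = b⁻¹·p(a₁, a₂, a₃)·b`, where `b⁻¹ = b\e` is the inverse of
`b` in the group `N(G)`. -/
theorem stmt_19 {G : Type*} (Q : FanQuasigroup G) (a₁ a₂ a₃ : G)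
    (b : G) (hb : b ∈ nucleusSet Q.mul) :
    Q.t a₁ a₂ (Q.mul a₃ b) = Q.t a₁ a₂ a₃ ∧
    Q.p (Q.mul b a₁) a₂ a₃ = Q.p a₁ a₂ a₃ ∧
    Q.t (Q.mul b a₁) a₂ a₃ = Q.mul (Q.mul b (Q.t a₁ a₂ a₃)) (Q.inv b) ∧
    Q.p a₁ a₂ (Q.mul a₃ b) = Q.mul (Q.mul (Q.inv b) (Q.p a₁ a₂ a₃)) b := by
  have hL : ∀ c d, Q.mul (Q.mul b c) d = Q.mul b (Q.mul c d) := hb.1.1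
  have hM : ∀ c d, Q.mul (Q.mul c b) d = Q.mul c (Q.mul b d) := hb.1.2
  have hR : ∀ c d, Q.mul (Q.mul c d) b = Q.mul c (Q.mul d b) := hb.2
  have hi := Q.inv_mem_nucleus hb
  have iL : ∀ c d, Q.mul (Q.mul (Q.inv b) c) d = Q.mul (Q.inv b) (Q.mul c d) := hi.1.1
  have iM : ∀ c d, Q.mul (Q.mul c (Q.inv b)) d = Q.mul c (Q.mul (Q.inv b) d) := hi.1.2
  have hbi : Q.mul b (Q.inv b) = Q.e := Q.mul_ldiv b Q.e
  have hib : Q.mul (Q.inv b) b = Q.e := Q.inv_mul_cancel' hb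
  have ht := Q.t_mem a₁ a₂ a₃
  have tL : ∀ c d, Q.mul (Q.mul (Q.t a₁ a₂ a₃) c) d
      = Q.mul (Q.t a₁ a₂ a₃) (Q.mul c d) := ht.1.1
  have hp := Q.p_mem a₁ a₂ a₃
  have pM : ∀ c d, Q.mul (Q.mul c (Q.p a₁ a₂ a₃)) d
      = Q.mul c (Q.mul (Q.p a₁ a₂ a₃) d) := hp.1.2
  have pR : ∀ c d, Q.mul (Q.mul c d) (Q.p a₁ a₂ a₃)
      = Q.mul c (Q.mul d (Q.p a₁ a₂ a₃)) := hp.2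
  refine ⟨?_, ?_, ?_, ?_⟩
  · -- (i)
    apply Q.t_eq_of
    calc Q.mul (Q.mul a₁ a₂) (Q.mul a₃ b)
        = Q.mul (Q.mul (Q.mul a₁ a₂) a₃) b := (hR _ _).symm
      _ = Q.mul (Q.mul (Q.t a₁ a₂ a₃) (Q.mul a₁ (Q.mul a₂ a₃))) b := by
          rw [Q.t_spec a₁ a₂ a₃]
      _ = Q.mul (Q.t a₁ a₂ a₃) (Q.mul (Q.mul a₁ (Q.mul a₂ a₃)) b) := tL _ _
      _ = Q.mul (Q.t a₁ a₂ a₃) (Q.mul a₁ (Q.mul a₂ (Q.mul a₃ b))) := by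
          rw [hR a₁ (Q.mul a₂ a₃), hR a₂ a₃]
  · -- (ii)
    apply Q.p_eq_of
    calc Q.mul (Q.mul (Q.mul b a₁) a₂) a₃
        = Q.mul b (Q.mul (Q.mul a₁ a₂) a₃) := by rw [hL a₁ a₂, hL]
      _ = Q.mul b (Q.mul (Q.mul a₁ (Q.mul a₂ a₃)) (Q.p a₁ a₂ a₃)) := by
          rw [Q.p_spec a₁ a₂ a₃]
      _ = Q.mul (Q.mul b (Q.mul a₁ (Q.mul a₂ a₃))) (Q.p a₁ a₂ a₃) := (pR _ _).symm
      _ = Q.mul (Q.mul (Q.mul b a₁) (Q.mul a₂ a₃)) (Q.p a₁ a₂ a₃) := by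
          rw [hL a₁ (Q.mul a₂ a₃)]
  · -- (iii)
    apply Q.t_eq_of
    calc Q.mul (Q.mul (Q.mul b a₁) a₂) a₃
        = Q.mul b (Q.mul (Q.mul a₁ a₂) a₃) := by rw [hL a₁ a₂, hL]
      _ = Q.mul b (Q.mul (Q.t a₁ a₂ a₃) (Q.mul a₁ (Q.mul a₂ a₃))) := by
          rw [Q.t_spec a₁ a₂ a₃]
      _ = Q.mul (Q.mul b (Q.t a₁ a₂ a₃)) (Q.mul a₁ (Q.mul a₂ a₃)) := (hL _ _).symm
      _ = Q.mul (Q.mul b (Q.t a₁ a₂ a₃))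
            (Q.mul (Q.inv b) (Q.mul b (Q.mul a₁ (Q.mul a₂ a₃)))) := by
          rw [← hM (Q.inv b) (Q.mul a₁ (Q.mul a₂ a₃)), hib, Q.one_mul]
      _ = Q.mul (Q.mul (Q.mul b (Q.t a₁ a₂ a₃)) (Q.inv b))
            (Q.mul b (Q.mul a₁ (Q.mul a₂ a₃))) := (iM _ _).symm
      _ = Q.mul (Q.mul (Q.mul b (Q.t a₁ a₂ a₃)) (Q.inv b))
            (Q.mul (Q.mul b a₁) (Q.mul a₂ a₃)) := by
          rw [hL a₁ (Q.mul a₂ a₃)]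
  · -- (iv)
    apply Q.p_eq_of
    calc Q.mul (Q.mul a₁ a₂) (Q.mul a₃ b)
        = Q.mul (Q.mul (Q.mul a₁ a₂) a₃) b := (hR _ _).symm
      _ = Q.mul (Q.mul (Q.mul a₁ (Q.mul a₂ a₃)) (Q.p a₁ a₂ a₃)) b := by
          rw [Q.p_spec a₁ a₂ a₃]
      _ = Q.mul (Q.mul a₁ (Q.mul a₂ a₃)) (Q.mul (Q.p a₁ a₂ a₃) b) := pM _ _
      _ = Q.mul (Q.mul a₁ (Q.mul a₂ a₃))
            (Q.mul (Q.mul b (Q.mul (Q.inv b) (Q.p a₁ a₂ a₃))) b) := by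
          rw [← iM b (Q.p a₁ a₂ a₃), hbi, Q.one_mul]
      _ = Q.mul (Q.mul a₁ (Q.mul a₂ a₃))
            (Q.mul b (Q.mul (Q.mul (Q.inv b) (Q.p a₁ a₂ a₃)) b)) := by
          rw [hL (Q.mul (Q.inv b) (Q.p a₁ a₂ a₃)) b]
      _ = Q.mul (Q.mul (Q.mul a₁ (Q.mul a₂ a₃)) b)
            (Q.mul (Q.mul (Q.inv b) (Q.p a₁ a₂ a₃)) b) := (hM _ _).symm
      _ = Q.mul (Q.mul a₁ (Q.mul a₂ (Q.mul a₃ b)))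
            (Q.mul (Q.mul (Q.inv b) (Q.p a₁ a₂ a₃)) b) := by
          rw [hR a₁ (Q.mul a₂ a₃), hR a₂ a₃]
end
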